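/- If T₁ and T₂ are commuting invertible measure preserving transformations on (X, 𝒜, μ) such that T₂∘T₁⁻¹ is ergodic, then for all bounded f₁, f₂, lim_N ∫ (1/N) Σ_{n=0}^{N-1} f₁(T₁ⁿx) f₂(T₂ⁿx) dμ = (∫ f₁ dμ)(∫ f₂ dμ). -/

import Mathlib

/-!
Write `S = T₂ T₁⁻¹`. By von Neumann's mean ergodic theorem the Birkhoff averages of the Koopman
operator of `S` on `L²` converge to the orthogonal projection onto its fixed vectors; by ergodicity
these are the constants, and as `1` is fixed the projection of `f₂` is the constant `∫ f₂`.
Pairing with `f₁` shows that the averages of `∫ f₁ · f₂ ∘ Sⁿ` tend to `∫ f₁ ∫ f₂`. Finally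
`T₂ⁿ = Sⁿ T₁ⁿ` because `T₁` and `T₂` commute, so as `T₁` preserves `μ`,
`∫ f₁ ∘ T₁ⁿ · f₂ ∘ T₂ⁿ = ∫ f₁ · f₂ ∘ Sⁿ`.
-/

open MeasureTheory Filter Topology

theorem Commute.mul_inv_pow_mul_pow {G : Type*} [Group G] {a b : G} (h : Commute a b) (n : ℕ) :
    (b * a⁻¹) ^ n * a ^ n = b ^ n := by
  rw [(h.symm.inv_right).mul_pow, inv_pow, inv_mul_cancel_right]

theorem MeasureTheory.MeasurePreserving.integral_comp_of_aestronglyMeasurable {X Y E : Type*}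
    [MeasurableSpace X] [MeasurableSpace Y] [NormedAddCommGroup E] [NormedSpace ℝ E]
    {μ : Measure X} {ν : Measure Y} {T : X → Y} (hT : MeasurePreserving T μ ν) {h : Y → E}
    (hh : AEStronglyMeasurable h ν) : ∫ x, h (T x) ∂μ = ∫ y, h y ∂ν := by
  rw [← hT.map_eq] at hh ⊢
  exact (integral_map hT.measurable.aemeasurable hh).symm

namespace MeasureTheory

variable {X : Type*} [MeasurableSpace X] {μ : Measure X} {S : X → X}

noncomputable def koopmanL2 (hS : MeasurePreserving S μ μ) : Lp ℝ 2 μ →L[ℝ] Lp ℝ 2 μ :=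
  (Lp.compMeasurePreservingₗᵢ ℝ S hS).toContinuousLinearMap

lemma koopmanL2_iterate_ae_eq (hS : MeasurePreserving S μ μ) (g : Lp ℝ 2 μ) (n : ℕ) :
    (koopmanL2 hS)^[n] g =ᵐ[μ] g ∘ S^[n] := by
  have : (koopmanL2 hS)^[n] g = Lp.compMeasurePreserving S^[n] (hS.iterate n) g :=
    congrFun (Lp.compMeasurePreserving_iterate hS n) g
  rw [this]
  exact Lp.coeFn_compMeasurePreserving g _

lemma L2.inner_const_one_left [IsFiniteMeasure μ] {𝕜 : Type*} [RCLike 𝕜] (g : Lp 𝕜 2 μ) :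
    inner 𝕜 (Lp.const 2 μ (1 : 𝕜)) g = ∫ x, g x ∂μ := by
  rw [← indicatorConstLp_univ, L2.inner_indicatorConstLp_one, setIntegral_univ]

lemma L2.real_inner_eq_integral_mul (F G : Lp ℝ 2 μ) :
    inner ℝ F G = ∫ x, F x * G x ∂μ := by
  rw [L2.inner_def]
  simp [mul_comm]

lemma Lp.integral_coeFn_const [IsProbabilityMeasure μ] {E : Type*} [NormedAddCommGroup E]
    [NormedSpace ℝ E] [CompleteSpace E] (p : ENNReal) (c : E) : ∫ x, Lp.const p μ c x ∂μ = c := by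
  rw [integral_congr_ae (Lp.coeFn_const p μ c)]
  simp

theorem Ergodic.tendsto_birkhoffAverage_koopmanL2 [IsProbabilityMeasure μ] (hS : Ergodic S μ)
    (g : Lp ℝ 2 μ) :
    Tendsto (birkhoffAverage ℝ (koopmanL2 hS.toMeasurePreserving) _root_.id · g) atTop
      (𝓝 (Lp.const 2 μ (∫ x, g x ∂μ))) := by
  set U := koopmanL2 hS.toMeasurePreserving
  set K := U.eqLocus (1 : Lp ℝ 2 μ →L[ℝ] Lp ℝ 2 μ)
  have hlim := U.tendsto_birkhoffAverage_orthogonalProjection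
    (LinearIsometry.norm_toContinuousLinearMap_le _) g
  obtain ⟨c, hc⟩ : ∃ c : ℝ, (K.orthogonalProjectionOnto g : Lp ℝ 2 μ).1 = AEEqFun.const X c :=
    hS.eq_const_of_compMeasurePreserving_eq (congrArg Subtype.val (K.orthogonalProjectionOnto g).2)
  have hproj : (K.orthogonalProjectionOnto g : Lp ℝ 2 μ) = Lp.const 2 μ c := Subtype.ext hc
  have one_mem : Lp.const 2 μ (1 : ℝ) ∈ K := Subtype.ext rfl
  have horth : inner ℝ (Lp.const 2 μ (1 : ℝ)) (g - K.orthogonalProjectionOnto g) = 0 :=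
    (Submodule.mem_orthogonal _ _).1 (K.sub_starProjection_mem_orthogonal g) _ one_mem
  rw [inner_sub_right, sub_eq_zero, L2.inner_const_one_left, L2.inner_const_one_left, hproj,
    Lp.integral_coeFn_const] at horth
  rwa [hproj, ← horth] at hlim

theorem Ergodic.tendsto_average_integral_mul_comp_iterate [IsProbabilityMeasure μ]
    (hS : Ergodic S μ) {f g : X → ℝ} (hf : MemLp f 2 μ) (hg : MemLp g 2 μ) :
    Tendsto (fun N : ℕ => (N : ℝ)⁻¹ * ∑ n ∈ Finset.range N, ∫ x, f x * g (S^[n] x) ∂μ)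
      atTop (𝓝 ((∫ x, f x ∂μ) * ∫ x, g x ∂μ)) := by
  have hlim := (tendsto_const_nhds (x := hf.toLp f)).inner (𝕜 := ℝ)
    (hS.tendsto_birkhoffAverage_koopmanL2 (hg.toLp g))
  have hterm (n : ℕ) : inner ℝ (hf.toLp f) ((koopmanL2 hS.toMeasurePreserving)^[n] (hg.toLp g))
      = ∫ x, f x * g (S^[n] x) ∂μ := by
    rw [L2.real_inner_eq_integral_mul]
    refine integral_congr_ae ?_
    filter_upwards [hf.coeFn_toLp, koopmanL2_iterate_ae_eq hS.toMeasurePreserving (hg.toLp g) n,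
      (hS.toMeasurePreserving.iterate n).quasiMeasurePreserving.ae_eq_comp hg.coeFn_toLp]
      with x hfx hgx hgSx
    rw [hfx, hgx, hgSx, Function.comp_apply]
  have hlimit : inner ℝ (hf.toLp f) (Lp.const 2 μ (∫ x, hg.toLp g x ∂μ))
      = (∫ x, f x ∂μ) * ∫ x, g x ∂μ := by
    rw [integral_congr_ae hg.coeFn_toLp, L2.real_inner_eq_integral_mul, ← integral_mul_const]
    refine integral_congr_ae ?_
    filter_upwards [hf.coeFn_toLp, Lp.coeFn_const 2 μ (∫ x, g x ∂μ)] with x hfx hcx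
    rw [hfx, hcx, Function.const_apply]
  refine (hlimit ▸ hlim).congr fun N => ?_
  simp only [birkhoffAverage, birkhoffSum, real_inner_smul_right, inner_sum, id, hterm]

end MeasureTheory

theorem limit_of_integral_of_nonconventional_averages_of_ergodic_general
    {X : Type*} [MeasurableSpace X] (μ : Measure X) [IsProbabilityMeasure μ]
    (T₁ T₂ : Equiv.Perm X)
    (hT₁ : MeasurePreserving T₁ μ μ)
    (hcomm : ∀ x, T₁ (T₂ x) = T₂ (T₁ x))
    (herg : Ergodic (⇑(T₂ * T₁⁻¹)) μ)
    (f₁ f₂ : X → ℝ) (hf₁ : Measurable f₁) (hf₂ : Measurable f₂)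
    (C : ℝ) (hb₁ : ∀ x, |f₁ x| ≤ C) (hb₂ : ∀ x, |f₂ x| ≤ C) :
    Tendsto
      (fun N : ℕ => ∫ x,
        (1 / (N : ℝ)) * ∑ n ∈ Finset.range N, f₁ ((⇑T₁)^[n] x) * f₂ ((⇑T₂)^[n] x) ∂μ)
      atTop (𝓝 ((∫ x, f₁ x ∂μ) * (∫ x, f₂ x ∂μ))) := by
  have hT₂_iterate (n : ℕ) (x : X) :
      (⇑T₂)^[n] x = (⇑(T₂ * T₁⁻¹))^[n] ((⇑T₁)^[n] x) := by
    have hcomm' : Commute T₁ T₂ := Equiv.ext hcomm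
    simp only [Equiv.Perm.iterate_eq_pow, ← Equiv.Perm.mul_apply, hcomm'.mul_inv_pow_mul_pow]
  set S := T₂ * T₁⁻¹
  have hL2₁ : MemLp f₁ 2 μ := .of_bound hf₁.aestronglyMeasurable C (.of_forall hb₁)
  have hL2₂ : MemLp f₂ 2 μ := .of_bound hf₂.aestronglyMeasurable C (.of_forall hb₂)
  have hint (n : ℕ) : Integrable (fun x => f₁ x * f₂ ((⇑S)^[n] x)) μ :=
    hL2₁.integrable_mul (hL2₂.comp_measurePreserving (herg.toMeasurePreserving.iterate n))
  have hint_comp (n : ℕ) :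
      Integrable (fun x => f₁ ((⇑T₁)^[n] x) * f₂ ((⇑S)^[n] ((⇑T₁)^[n] x))) μ :=
    (hT₁.iterate n).integrable_comp_of_integrable (hint n)
  refine (herg.tendsto_average_integral_mul_comp_iterate hL2₁ hL2₂).congr fun N => ?_
  simp only [hT₂_iterate]
  rw [integral_const_mul, one_div, integral_finsetSum _ fun n _ => hint_comp n]
  congr 1
  exact Finset.sum_congr rfl fun n _ =>
    ((hT₁.iterate n).integral_comp_of_aestronglyMeasurable (hint n).1).symm

/-- If `T₁, T₂` are commuting invertible measure preserving transformations on a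
probability space such that `T₂ ∘ T₁⁻¹` is ergodic, then for all bounded measurable
`f₁, f₂`, `lim_N ∫ (1/N) ∑_{n<N} f₁(T₁ⁿ x) f₂(T₂ⁿ x) dμ = (∫ f₁ dμ)(∫ f₂ dμ)`. -/
theorem limit_of_integral_of_nonconventional_averages_of_ergodic
    {X : Type*} [MeasurableSpace X] (μ : Measure X) [IsProbabilityMeasure μ]
    (T₁ T₂ : Equiv.Perm X)
    (hT₁m : Measurable T₁) (hT₁m' : Measurable T₁.symm)
    (hT₂m : Measurable T₂) (hT₂m' : Measurable T₂.symm)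
    (hT₁ : MeasurePreserving T₁ μ μ) (hT₂ : MeasurePreserving T₂ μ μ)
    (hcomm : ∀ x, T₁ (T₂ x) = T₂ (T₁ x))
    (herg : Ergodic (⇑(T₂ * T₁⁻¹)) μ)
    (f₁ f₂ : X → ℝ) (hf₁ : Measurable f₁) (hf₂ : Measurable f₂)
    (C : ℝ) (hb₁ : ∀ x, |f₁ x| ≤ C) (hb₂ : ∀ x, |f₂ x| ≤ C) :
    Tendsto
      (fun N : ℕ => ∫ x,
        (1 / (N : ℝ)) * ∑ n ∈ Finset.range N, f₁ ((⇑T₁)^[n] x) * f₂ ((⇑T₂)^[n] x) ∂μ)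
      atTop (𝓝 ((∫ x, f₁ x ∂μ) * (∫ x, f₂ x ∂μ))) :=
  limit_of_integral_of_nonconventional_averages_of_ergodic_general μ T₁ T₂ hT₁ hcomm herg f₁ f₂ hf₁
    hf₂ C hb₁ hb₂
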